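/- The vector field X₁ + 3X₂ generates a symmetry group of the equation u_t = x²u_{xx} + 4x(⅓x·u^{1/3} + 1)u_x + 4x·u^{4/3}: if u(t,x) > 0 solves the equation, then for every ε ∈ ℝ the function u_ε(t,x) = e^{-9ε}·u(t − ε, e^{-3ε}x) also solves it. -/

import Mathlib

/-!
The flow of `X₁ + 3X₂` sends `u` to `u_ε(t, x) = a³ u(t - ε, a x)` with `a = e^{-3ε}`. By the
chain rule `∂ₜu_ε = a³ uₜ`, `∂ₓu_ε = a⁴ uₓ` and `∂ₓₓu_ε = a⁵ uₓₓ`, evaluated at `(t - ε, a x)`;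
for `deriv` these hold without any differentiability, both sides being `0` where `u` is not
differentiable. For `u > 0` the nonlinear terms scale as `(a³ u)^{1/3} = a u^{1/3}` and
`(a³ u)^{4/3} = a⁴ u^{4/3}`. Every term of the equation is therefore homogeneous of weight `3`
in `a`, so `u_ε` solves it wherever `u` does.
-/

open Real

section Rescaling

variable (f : ℝ → ℝ) (c a : ℝ)

theorem deriv_const_mul_comp_sub_const (ε t : ℝ) :
    deriv (fun s => c * f (s - ε)) t = c * deriv f (t - ε) := by
  rw [deriv_const_mul_field, deriv_comp_sub_const]

theorem deriv_const_mul_comp_mul_left :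
    deriv (fun y => c * f (a * y)) = fun x => c * a * deriv f (a * x) := by
  funext x
  rw [deriv_const_mul_field, deriv_comp_mul_left, smul_eq_mul, mul_assoc]

theorem deriv_deriv_const_mul_comp_mul_left (x : ℝ) :
    deriv (deriv fun y => c * f (a * y)) x = c * a ^ 2 * deriv (deriv f) (a * x) := by
  rw [deriv_const_mul_comp_mul_left, deriv_const_mul_comp_mul_left]
  ring

end Rescaling

theorem cube_mul_rpow_div_three {a v : ℝ} (ha : 0 ≤ a) (hv : 0 ≤ v) (k : ℝ) :
    (a ^ 3 * v) ^ (k / 3) = a ^ k * v ^ (k / 3) := by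
  rw [mul_rpow (by positivity) hv, ← rpow_natCast, ← rpow_mul ha, Nat.cast_ofNat,
    mul_div_cancel₀ k three_ne_zero]

theorem stmt_14_general (S : Set (ℝ × ℝ))
    (u : ℝ → ℝ → ℝ)
    (hpos : ∀ t x : ℝ, (t, x) ∈ S → 0 < u t x)
    (hpde : ∀ t x : ℝ, (t, x) ∈ S →
      deriv (fun s => u s x) t =
        x ^ 2 * deriv (deriv (fun y => u t y)) x
        + 4 * x * ((1 / 3) * x * (u t x) ^ ((1 : ℝ) / 3) + 1) * deriv (fun y => u t y) x
        + 4 * x * (u t x) ^ ((4 : ℝ) / 3)) :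
    ∀ ε t x : ℝ, (t - ε, Real.exp (-3 * ε) * x) ∈ S →
      deriv (fun s => Real.exp (-9 * ε) * u (s - ε) (Real.exp (-3 * ε) * x)) t =
        x ^ 2 * deriv (deriv (fun y =>
            Real.exp (-9 * ε) * u (t - ε) (Real.exp (-3 * ε) * y))) x
        + 4 * x * ((1 / 3) * x
              * (Real.exp (-9 * ε) * u (t - ε) (Real.exp (-3 * ε) * x)) ^ ((1 : ℝ) / 3) + 1)
            * deriv (fun y => Real.exp (-9 * ε) * u (t - ε) (Real.exp (-3 * ε) * y)) x
        + 4 * x * (Real.exp (-9 * ε) * u (t - ε) (Real.exp (-3 * ε) * x)) ^ ((4 : ℝ) / 3) := by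
  intro ε t x hmem
  set a := exp (-3 * ε)
  have hc : exp (-9 * ε) = a ^ 3 := by rw [← exp_nat_mul]; ring_nf
  have ha : 0 ≤ a := (exp_pos _).le
  have hu : 0 ≤ u (t - ε) (a * x) := (hpos _ _ hmem).le
  rw [deriv_const_mul_comp_sub_const (fun s => u s (a * x)), deriv_deriv_const_mul_comp_mul_left,
    deriv_const_mul_comp_mul_left, hc, cube_mul_rpow_div_three ha hu,
    cube_mul_rpow_div_three ha hu, rpow_one, rpow_ofNat, hpde _ _ hmem]
  ring

/-- the vector field `X₁ + 3X₂`, with flow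
`(t,x,u) ↦ (t + ε, e^{3ε}x, e^{−9ε}u)`, generates a symmetry group of
`u_t = x²u_{xx} + 4x(⅓x·u^{1/3} + 1)u_x + 4x·u^{4/3}`: if `u > 0` solves the equation
on an open subset `S` of `ℝ₊ × ℝ₊`, then for every `ε ∈ ℝ` the function
`u_ε(t,x) = e^{−9ε}·u(t − ε, e^{−3ε}x)` also solves it on the transformed domain. -/
theorem stmt_14 (S : Set (ℝ × ℝ)) (hS : IsOpen S)
    (hSsub : S ⊆ Set.Ioi (0 : ℝ) ×ˢ Set.Ioi (0 : ℝ))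
    (u : ℝ → ℝ → ℝ) (hreg : ContDiffOn ℝ 2 (Function.uncurry u) S)
    (hpos : ∀ t x : ℝ, (t, x) ∈ S → 0 < u t x)
    (hpde : ∀ t x : ℝ, (t, x) ∈ S →
      deriv (fun s => u s x) t =
        x ^ 2 * deriv (deriv (fun y => u t y)) x
        + 4 * x * ((1 / 3) * x * (u t x) ^ ((1 : ℝ) / 3) + 1) * deriv (fun y => u t y) x
        + 4 * x * (u t x) ^ ((4 : ℝ) / 3)) :
    ∀ ε t x : ℝ, (t - ε, Real.exp (-3 * ε) * x) ∈ S →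
      deriv (fun s => Real.exp (-9 * ε) * u (s - ε) (Real.exp (-3 * ε) * x)) t =
        x ^ 2 * deriv (deriv (fun y =>
            Real.exp (-9 * ε) * u (t - ε) (Real.exp (-3 * ε) * y))) x
        + 4 * x * ((1 / 3) * x
              * (Real.exp (-9 * ε) * u (t - ε) (Real.exp (-3 * ε) * x)) ^ ((1 : ℝ) / 3) + 1)
            * deriv (fun y => Real.exp (-9 * ε) * u (t - ε) (Real.exp (-3 * ε) * y)) x
        + 4 * x * (Real.exp (-9 * ε) * u (t - ε) (Real.exp (-3 * ε) * x)) ^ ((4 : ℝ) / 3) :=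
  stmt_14_general S u hpos hpde
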